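/- Let X and Y be random variables on a probability space (Ω, μ) (μ a probability measure) taking values in finite types 𝒳 and 𝒴, let f : 𝒳 × 𝒴 → 𝒵₁ and g : 𝒳 × 𝒴 → 𝒵₂ (𝒵₁, 𝒵₂ finite types), and let W be a random variable taking values in Finset (𝒳 × 𝒴) such that almost surely: (a) (X, Y) ∈ W; (b) for all (x, y), (x, y') ∈ W, f(x, y) = f(x, y'); and (c) for all (x, y), (x', y) ∈ W, g(x, y) = g(x', y). Then H[f(X, Y) | (W, X)] = 0 and H[g(X, Y) | (W, Y)] = 0. -/

import Mathlib

/-!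
On an independent set `w` of the modified rook's graph, `f` is constant on each row and `g` on
each column. So if `(X, Y) ∈ W` almost surely, then `f (X, Y)` is almost surely the value of `f`
on row `X` of `W`, a function of `(W, X)`; likewise `g (X, Y)` is a function of `(W, Y)`. A random
variable that is almost surely a function of another has zero conditional entropy given it,
because appending an injective image (here the graph of that function) does not change entropy.
-/

open MeasureTheory

/-- Shannon entropy of a random variable taking values in a finite type. -/
noncomputable def ent {Ω : Type*} [MeasurableSpace Ω] (μ : Measure Ω)
    {α : Type*} [Fintype α] (X : Ω → α) : ℝ :=
  ∑ a : α, Real.negMulLog ((μ (X ⁻¹' {a})).toReal)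

/-- `condEnt μ X Y` is the conditional Shannon entropy `H[Y | X]`. -/
noncomputable def condEnt {Ω : Type*} [MeasurableSpace Ω] (μ : Measure Ω)
    {α β : Type*} [Fintype α] [Fintype β] (X : Ω → α) (Y : Ω → β) : ℝ :=
  ent μ (fun ω => (X ω, Y ω)) - ent μ X

section Entropy

variable {Ω : Type*} [MeasurableSpace Ω] {μ : Measure Ω} {α β : Type*} [Fintype α] [Fintype β]

lemma ent_congr_ae {U V : Ω → α} (h : U =ᵐ[μ] V) : ent μ U = ent μ V :=
  Finset.sum_congr rfl fun a _ => by rw [measure_congr (h.preimage {a})]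

lemma ent_comp_of_injective (U : Ω → α) {e : α → β} (he : Function.Injective e) :
    ent μ (e ∘ U) = ent μ U := by
  refine (Fintype.sum_of_injective e he _ _ ?_ fun a => ?_).symm
  · intro b hb
    have : e ∘ U ⁻¹' {b} = ∅ :=
      Set.eq_empty_of_forall_notMem fun ω hω => hb ⟨U ω, hω⟩
    simp [this]
  · rw [Set.preimage_comp, ← Set.image_singleton, he.preimage_image]

lemma condEnt_eq_zero_of_ae_eq_comp (U : Ω → α) (Z : Ω → β) (φ : α → β)
    (h : ∀ᵐ ω ∂μ, Z ω = φ (U ω)) : condEnt μ U Z = 0 := by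
  have hgraph : (fun ω => (U ω, Z ω)) =ᵐ[μ] (fun a => (a, φ a)) ∘ U := by
    filter_upwards [h] with ω hω
    simp [hω]
  have hinj : Function.Injective fun a : α => (a, φ a) := fun a b hab => congrArg Prod.fst hab
  rw [condEnt, ent_congr_ae hgraph, ent_comp_of_injective U hinj, sub_self]

end Entropy

section FiberValue

variable {κ ι γ : Type*} [Nonempty γ]

open Classical in
noncomputable def fiberValue (f : κ → γ) (k : κ → ι) (w : Set κ) (i : ι) : γ :=
  if h : ∃ p ∈ w, k p = i then f h.choose else Classical.arbitrary γ

lemma fiberValue_eq {f : κ → γ} {k : κ → ι} {w : Set κ}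
    (hw : ∀ p ∈ w, ∀ q ∈ w, k p = k q → f p = f q) {p : κ} (hp : p ∈ w) :
    fiberValue f k w (k p) = f p := by
  have hex : ∃ q ∈ w, k q = k p := ⟨p, hp, rfl⟩
  rw [fiberValue, dif_pos hex]
  exact hw _ hex.choose_spec.1 p hp hex.choose_spec.2

end FiberValue

theorem independent_set_determines_functions_general
    {Ω : Type*} [MeasurableSpace Ω] (μ : Measure Ω) [IsProbabilityMeasure μ]
    {𝒳 𝒴 𝒵₁ 𝒵₂ : Type*} [Fintype 𝒳] [Fintype 𝒴] [Fintype 𝒵₁] [Fintype 𝒵₂]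
    (X : Ω → 𝒳) (Y : Ω → 𝒴)
    (f : 𝒳 × 𝒴 → 𝒵₁) (g : 𝒳 × 𝒴 → 𝒵₂)
    (W : Ω → Finset (𝒳 × 𝒴))
    (ha : ∀ᵐ ω ∂μ, (X ω, Y ω) ∈ W ω)
    (hb : ∀ᵐ ω ∂μ, ∀ p ∈ W ω, ∀ q ∈ W ω, p.1 = q.1 → f p = f q)
    (hc : ∀ᵐ ω ∂μ, ∀ p ∈ W ω, ∀ q ∈ W ω, p.2 = q.2 → g p = g q) :
    condEnt μ (fun ω => (W ω, X ω)) (fun ω => f (X ω, Y ω)) = 0 ∧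
    condEnt μ (fun ω => (W ω, Y ω)) (fun ω => g (X ω, Y ω)) = 0 := by
  obtain ⟨ω₀⟩ := nonempty_of_isProbabilityMeasure μ
  have : Nonempty 𝒵₁ := ⟨f (X ω₀, Y ω₀)⟩
  have : Nonempty 𝒵₂ := ⟨g (X ω₀, Y ω₀)⟩
  constructor
  · refine condEnt_eq_zero_of_ae_eq_comp _ _ (fun wx => fiberValue f Prod.fst ↑wx.1 wx.2) ?_
    filter_upwards [ha, hb] with ω hmem hrow
    exact (fiberValue_eq hrow hmem).symm
  · refine condEnt_eq_zero_of_ae_eq_comp _ _ (fun wy => fiberValue g Prod.snd ↑wy.1 wy.2) ?_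
    filter_upwards [ha, hc] with ω hmem hcol
    exact (fiberValue_eq hcol hmem).symm

/-- Lemma 5 (lemma2_rooks): if `W` is almost surely an independent set of the
`fg`-modified rook's graph containing `(X, Y)`, then
`H[f(X,Y) | (W, X)] = 0` and `H[g(X,Y) | (W, Y)] = 0`. -/
theorem independent_set_determines_functions
    {Ω : Type*} [MeasurableSpace Ω] (μ : Measure Ω) [IsProbabilityMeasure μ]
    {𝒳 𝒴 𝒵₁ 𝒵₂ : Type*} [Fintype 𝒳] [Fintype 𝒴] [Fintype 𝒵₁] [Fintype 𝒵₂]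
    [DecidableEq 𝒳] [DecidableEq 𝒴]
    [MeasurableSpace 𝒳] [MeasurableSingletonClass 𝒳]
    [MeasurableSpace 𝒴] [MeasurableSingletonClass 𝒴]
    [MeasurableSpace (Finset (𝒳 × 𝒴))] [MeasurableSingletonClass (Finset (𝒳 × 𝒴))]
    (X : Ω → 𝒳) (Y : Ω → 𝒴) (hX : Measurable X) (hY : Measurable Y)
    (f : 𝒳 × 𝒴 → 𝒵₁) (g : 𝒳 × 𝒴 → 𝒵₂)
    (W : Ω → Finset (𝒳 × 𝒴)) (hW : Measurable W)
    (ha : ∀ᵐ ω ∂μ, (X ω, Y ω) ∈ W ω)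
    (hb : ∀ᵐ ω ∂μ, ∀ p ∈ W ω, ∀ q ∈ W ω, p.1 = q.1 → f p = f q)
    (hc : ∀ᵐ ω ∂μ, ∀ p ∈ W ω, ∀ q ∈ W ω, p.2 = q.2 → g p = g q) :
    condEnt μ (fun ω => (W ω, X ω)) (fun ω => f (X ω, Y ω)) = 0 ∧
    condEnt μ (fun ω => (W ω, Y ω)) (fun ω => g (X ω, Y ω)) = 0 :=
  independent_set_determines_functions_general μ X Y f g W ha hb hc
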